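/- arXiv:1403.3469 — 2 statements merged into one kernel-verified Lean document; each statement's English description precedes it below -/
import Mathlib

section
/- Let (Ω, 𝓕, P) be a probability space, let U_1, …, U_N be fixed unitary ℓ×ℓ complex matrices, and let Ũ_1, …, Ũ_N : Ω → M_ℓ(ℂ) be measurable random matrices that are almost surely unitary. Suppose that for every p the mean-square machine error satisfies E[‖U_p − Ũ_p‖²] ≤ ℓ ε_m², where ‖·‖ is the spectral norm and ε_m ≥ 0. Then the error ε := ‖U_N ⋯ U_1 − Ũ_N ⋯ Ũ_1‖ satisfies √(E[ε²]) ≤ N ε_m √ℓ; in particular its standard deviation satisfies σ(ε) ≤ N ε_m √ℓ. -/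
open MeasureTheory ProbabilityTheory
open scoped Matrix.Norms.L2Operator

/-- Matrices inherit the product measurable-space structure (entrywise). -/
noncomputable instance matrixMeasurableSpace {l : ℕ} : MeasurableSpace (Matrix (Fin l) (Fin l) ℂ) :=
  inferInstanceAs (MeasurableSpace ((Fin l) → (Fin l) → ℂ))

/-- The ordered product `U_{n} U_{n-1} ⋯ U_1` of matrices (written with 0-based
indices), where the factor with the largest index acts last (leftmost). -/
noncomputable def mprod {l : ℕ} (U : ℕ → Matrix (Fin l) (Fin l) ℂ) :
    ℕ → Matrix (Fin l) (Fin l) ℂ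
  | 0 => 1
  | n + 1 => U n * mprod U n

/-!
On the event where every `Ũ_p` is unitary, telescoping gives
`U_N ⋯ U_1 − Ũ_N ⋯ Ũ_1 = ∑_p Ũ_N ⋯ Ũ_{p+1} (U_p − Ũ_p) U_{p-1} ⋯ U_1`, and unitaries do not
change the spectral norm, so `ε ≤ ∑_p ‖U_p − Ũ_p‖`. Cauchy–Schwarz turns this into
`ε² ≤ N ∑_p ‖U_p − Ũ_p‖²`; taking expectations gives `E[ε²] ≤ N² ℓ ε_m²`, and the standard
deviation is bounded by the root mean square.
-/

open Finset

theorem norm_le_one_of_mem_unitary {E : Type*} [NormedRing E] [StarRing E] [CStarRing E]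
    {U : E} (hU : U ∈ unitary E) : ‖U‖ ≤ 1 := by
  rcases subsingleton_or_nontrivial E with _ | _
  · simp [Subsingleton.elim U 0]
  · exact (CStarRing.norm_of_mem_unitary hU).le

theorem integral_sq_le_of_le_sum {Ω : Type*} [MeasurableSpace Ω] {μ : Measure Ω}
    {f : Ω → ℝ} {g : ℕ → Ω → ℝ} {n : ℕ} {c : ℝ} (hf₀ : 0 ≤ᵐ[μ] f)
    (hfg : ∀ᵐ ω ∂μ, f ω ≤ ∑ p ∈ range n, g p ω)
    (hg : ∀ p < n, Integrable (fun ω => g p ω ^ 2) μ)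
    (hc : ∀ p < n, ∫ ω, g p ω ^ 2 ∂μ ≤ c) :
    ∫ ω, f ω ^ 2 ∂μ ≤ n ^ 2 * c := by
  have hg' : ∀ p ∈ range n, Integrable (fun ω => g p ω ^ 2) μ := fun p hp =>
    hg p (mem_range.1 hp)
  have hpointwise : ∀ᵐ ω ∂μ, f ω ^ 2 ≤ n * ∑ p ∈ range n, g p ω ^ 2 := by
    filter_upwards [hf₀, hfg] with ω h₀ hle
    calc f ω ^ 2 ≤ (∑ p ∈ range n, g p ω) ^ 2 := pow_le_pow_left₀ h₀ hle 2
      _ ≤ n * ∑ p ∈ range n, g p ω ^ 2 := by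
        simpa using sq_sum_le_card_mul_sum_sq (s := range n) (f := fun p => g p ω)
  calc ∫ ω, f ω ^ 2 ∂μ ≤ ∫ ω, n * ∑ p ∈ range n, g p ω ^ 2 ∂μ :=
        integral_mono_of_nonneg (.of_forall fun ω => sq_nonneg _)
          ((integrable_finsetSum _ hg').const_mul _) hpointwise
    _ = n * ∑ p ∈ range n, ∫ ω, g p ω ^ 2 ∂μ := by
        rw [integral_const_mul, integral_finsetSum _ hg']
    _ ≤ n * ∑ _p ∈ range n, c := by
        gcongr with p hp
        exact hc p (mem_range.1 hp)
    _ = n ^ 2 * c := by simp only [sum_const, card_range, nsmul_eq_mul]; ring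

section Matrix

variable {l : ℕ}

/-- The L2 operator norm topology on matrices is the entrywise one. -/
instance matrixBorelSpace : BorelSpace (Matrix (Fin l) (Fin l) ℂ) :=
  inferInstanceAs (BorelSpace (Fin l → Fin l → ℂ))

theorem mprod_mem_unitaryGroup {A : ℕ → Matrix (Fin l) (Fin l) ℂ} {n : ℕ}
    (hA : ∀ p < n, A p ∈ Matrix.unitaryGroup (Fin l) ℂ) :
    mprod A n ∈ Matrix.unitaryGroup (Fin l) ℂ := by
  induction n with
  | zero => exact one_mem _
  | succ n ih =>
    exact mul_mem (hA n n.lt_succ_self) (ih fun p hp => hA p (hp.trans n.lt_succ_self))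

theorem norm_mprod_sub_mprod_le {A B : ℕ → Matrix (Fin l) (Fin l) ℂ} {n : ℕ}
    (hA : ∀ p < n, A p ∈ Matrix.unitaryGroup (Fin l) ℂ)
    (hB : ∀ p < n, B p ∈ Matrix.unitaryGroup (Fin l) ℂ) :
    ‖mprod A n - mprod B n‖ ≤ ∑ p ∈ range n, ‖A p - B p‖ := by
  induction n with
  | zero => simp [mprod]
  | succ n ih =>
    have hA' : ∀ p < n, A p ∈ Matrix.unitaryGroup (Fin l) ℂ := fun p hp =>
      hA p (hp.trans n.lt_succ_self)
    have hB' : ∀ p < n, B p ∈ Matrix.unitaryGroup (Fin l) ℂ := fun p hp =>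
      hB p (hp.trans n.lt_succ_self)
    have hsplit : mprod A (n + 1) - mprod B (n + 1) =
        (A n - B n) * mprod A n + B n * (mprod A n - mprod B n) := by
      simp only [mprod]
      noncomm_ring
    calc ‖mprod A (n + 1) - mprod B (n + 1)‖
        ≤ ‖(A n - B n) * mprod A n‖ + ‖B n * (mprod A n - mprod B n)‖ := by
          rw [hsplit]; exact norm_add_le _ _
      _ = ‖A n - B n‖ + ‖mprod A n - mprod B n‖ := by
          rw [CStarRing.norm_mul_mem_unitary _ (mprod_mem_unitaryGroup hA'),
            CStarRing.norm_mem_unitary_mul _ (hB n n.lt_succ_self)]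
      _ ≤ ∑ p ∈ range (n + 1), ‖A p - B p‖ := by
          rw [sum_range_succ, add_comm]
          gcongr
          exact ih hA' hB'

variable {Ω : Type*} [MeasurableSpace Ω]

theorem measurable_mprod {V : ℕ → Ω → Matrix (Fin l) (Fin l) ℂ} {n : ℕ}
    (hV : ∀ p < n, Measurable (V p)) : Measurable fun ω => mprod (fun p => V p ω) n := by
  induction n with
  | zero => exact measurable_const
  | succ n ih =>
    exact (hV n n.lt_succ_self).mul (ih fun p hp => hV p (hp.trans n.lt_succ_self))

theorem integrable_norm_sub_sq_of_mem_unitaryGroup {μ : Measure Ω} [IsFiniteMeasure μ]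
    {U : Matrix (Fin l) (Fin l) ℂ} {V : Ω → Matrix (Fin l) (Fin l) ℂ}
    (hU : U ∈ Matrix.unitaryGroup (Fin l) ℂ) (hV : Measurable V)
    (hVunit : ∀ᵐ ω ∂μ, V ω ∈ Matrix.unitaryGroup (Fin l) ℂ) :
    Integrable (fun ω => ‖U - V ω‖ ^ 2) μ := by
  refine .of_bound ((measurable_const.sub hV).norm.pow_const 2).aestronglyMeasurable (2 ^ 2) ?_
  filter_upwards [hVunit] with ω hω
  have hle : ‖U - V ω‖ ≤ 2 := calc
    ‖U - V ω‖ ≤ ‖U‖ + ‖V ω‖ := norm_sub_le _ _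
    _ ≤ 1 + 1 := add_le_add (norm_le_one_of_mem_unitary hU) (norm_le_one_of_mem_unitary hω)
    _ = 2 := one_add_one_eq_two
  rw [Real.norm_of_nonneg (by positivity)]
  exact pow_le_pow_left₀ (norm_nonneg _) hle 2

end Matrix

/-- Let `(Ω, 𝓕, P)` be a probability space, `U_1, …, U_N` fixed unitary
`ℓ×ℓ` complex matrices and `Ũ_1, …, Ũ_N : Ω → M_ℓ(ℂ)` measurable random matrices that are
almost surely unitary. If the mean-square machine error satisfies
`E[‖U_p − Ũ_p‖²] ≤ ℓ ε_m²` (spectral norm) for every `p`, then the error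
`ε := ‖U_N ⋯ U_1 − Ũ_N ⋯ Ũ_1‖` satisfies `√(E[ε²]) ≤ N ε_m √ℓ`; in particular its
standard deviation satisfies `σ(ε) ≤ N ε_m √ℓ`. -/
theorem unitary_random_product_error {Ω : Type*} [MeasurableSpace Ω]
    (P : Measure Ω) [IsProbabilityMeasure P]
    {l N : ℕ} (εm : ℝ) (hεm : 0 ≤ εm)
    (U : ℕ → Matrix (Fin l) (Fin l) ℂ)
    (V : ℕ → Ω → Matrix (Fin l) (Fin l) ℂ)
    (hU : ∀ p < N, U p ∈ Matrix.unitaryGroup (Fin l) ℂ)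
    (hVmeas : ∀ p < N, Measurable (V p))
    (hVunit : ∀ p < N, ∀ᵐ ω ∂P, V p ω ∈ Matrix.unitaryGroup (Fin l) ℂ)
    (herr : ∀ p < N, ∫ ω, ‖U p - V p ω‖ ^ 2 ∂P ≤ (l : ℝ) * εm ^ 2) :
    Real.sqrt (∫ ω, ‖mprod U N - mprod (fun p => V p ω) N‖ ^ 2 ∂P) ≤
        (N : ℝ) * εm * Real.sqrt l ∧
      Real.sqrt (variance (fun ω => ‖mprod U N - mprod (fun p => V p ω) N‖) P) ≤
        (N : ℝ) * εm * Real.sqrt l := by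
  have htelescope : ∀ᵐ ω ∂P,
      ‖mprod U N - mprod (fun p => V p ω) N‖ ≤ ∑ p ∈ range N, ‖U p - V p ω‖ := by
    filter_upwards [ae_all_iff.2 fun p => Filter.eventually_imp_distrib_left.2 (hVunit p)]
      with ω hω
    exact norm_mprod_sub_mprod_le hU hω
  have hint : ∀ p < N, Integrable (fun ω => ‖U p - V p ω‖ ^ 2) P := fun p hp =>
    integrable_norm_sub_sq_of_mem_unitaryGroup (hU p hp) (hVmeas p hp) (hVunit p hp)
  have hmean_sq : ∫ ω, ‖mprod U N - mprod (fun p => V p ω) N‖ ^ 2 ∂P ≤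
      ((N : ℝ) * εm * Real.sqrt l) ^ 2 := by
    refine (integral_sq_le_of_le_sum (.of_forall fun ω => norm_nonneg _) htelescope hint
      herr).trans_eq ?_
    rw [mul_pow, mul_pow, Real.sq_sqrt l.cast_nonneg, mul_assoc, mul_comm (l : ℝ)]
  have hrms : Real.sqrt (∫ ω, ‖mprod U N - mprod (fun p => V p ω) N‖ ^ 2 ∂P) ≤
      (N : ℝ) * εm * Real.sqrt l :=
    Real.sqrt_le_iff.2 ⟨by positivity, hmean_sq⟩
  have hmeas : Measurable fun ω => ‖mprod U N - mprod (fun p => V p ω) N‖ :=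
    (measurable_const.sub (measurable_mprod hVmeas)).norm
  exact ⟨hrms,
    (Real.sqrt_le_sqrt (variance_le_expectation_sq hmeas.aestronglyMeasurable)).trans hrms⟩
end

section
/- Let s² > 0 and let Z be a real-valued random variable distributed as the real Gaussian with mean 0 and variance s². Then the error variable ε = |1 − e^{Z}| satisfies the variance lower bound Var(ε) ≥ e^{2s²} − e^{s²} − 2 e^{s²/2} + 1. In particular, taking s² = N ε_m², the standard deviation of the error of a product of N log-normally modeled factors with machine epsilon ε_m diverges exponentially with N. -/
/-! The second moment of `|1 - e^Z|` is `1 - 2 E[e^Z] + E[e^{2Z}]`, so it suffices to bound the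
mean of `|1 - e^Z|` by `E[e^Z] = e^{s²/2}`. This follows from the pointwise bound
`|1 - e^z| ≤ e^z - 1 + 2·1_{z<0}` and `P(Z < 0) ≤ 1/2`, by symmetry of the centred Gaussian. -/

open MeasureTheory ProbabilityTheory Real Set

lemma abs_one_sub_exp_le (x : ℝ) : |1 - exp x| ≤ exp x - 1 + (Iio 0).indicator (fun _ ↦ 2) x := by
  by_cases hx : x < 0
  · rw [indicator_of_mem (mem_Iio.2 hx), abs_le]
    constructor <;> linarith [exp_pos x]
  · rw [indicator_of_notMem (notMem_Iio.2 (not_lt.1 hx)), add_zero, abs_sub_comm,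
      abs_of_nonneg (sub_nonneg.2 (one_le_exp (not_lt.1 hx)))]

lemma measureReal_Iio_zero_le_half_of_map_neg_eq {μ : Measure ℝ} [IsProbabilityMeasure μ]
    (hμ : μ.map (fun x ↦ -x) = μ) :
    μ.real (Iio 0) ≤ 1 / 2 := by
  have hIoi : μ.real (Ioi 0) = μ.real (Iio 0) := by
    conv_lhs => rw [← hμ]
    rw [map_measureReal_apply measurable_neg measurableSet_Ioi]
    congr 1
    ext x
    simp
  have hsum : μ.real (Iio 0) + μ.real (Ioi 0) ≤ 1 := by
    rw [← measureReal_union Ioi_disjoint_Iio_same.symm measurableSet_Ioi]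
    exact measureReal_le_one
  linarith

lemma exp_sq (x : ℝ) : exp x ^ 2 = exp (2 * x) := by
  rw [sq, ← exp_add, two_mul]

lemma memLp_exp_two {μ : Measure ℝ} (h : Integrable (fun x ↦ exp (2 * x)) μ) : MemLp exp 2 μ := by
  rw [memLp_two_iff_integrable_sq measurable_exp.aestronglyMeasurable]
  simpa only [exp_sq] using h

section

variable {μ : Measure ℝ} [IsProbabilityMeasure μ]

lemma integral_abs_one_sub_exp_le (hexp : Integrable exp μ) (hμ : μ.real (Iio 0) ≤ 1 / 2) :
    ∫ x, |1 - exp x| ∂μ ≤ ∫ x, exp x ∂μ := by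
  have hind : Integrable ((Iio 0).indicator fun _ ↦ (2 : ℝ)) μ :=
    (integrable_const 2).indicator measurableSet_Iio
  have hsub : Integrable (fun x ↦ exp x - 1) μ := hexp.sub (integrable_const 1)
  calc ∫ x, |1 - exp x| ∂μ
      ≤ ∫ x, (exp x - 1 + (Iio 0).indicator (fun _ ↦ 2) x) ∂μ :=
        integral_mono ((integrable_const 1).sub hexp).abs (hsub.add hind) abs_one_sub_exp_le
    _ = ∫ x, exp x ∂μ - 1 + 2 * μ.real (Iio 0) := by
        rw [integral_add hsub hind, integral_sub hexp (integrable_const 1),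
          integral_indicator_const _ measurableSet_Iio]
        simp [mul_comm]
    _ ≤ ∫ x, exp x ∂μ := by linarith

lemma sub_le_variance_abs_one_sub_exp (h2 : Integrable (fun x ↦ exp (2 * x)) μ)
    (hmean : ∫ x, |1 - exp x| ∂μ ≤ ∫ x, exp x ∂μ) :
    ∫ x, exp (2 * x) ∂μ - (∫ x, exp x ∂μ) ^ 2 - 2 * ∫ x, exp x ∂μ + 1 ≤
      variance (fun x ↦ |1 - exp x|) μ := by
  have hexp := memLp_exp_two h2
  have hsq : ∫ x, |1 - exp x| ^ 2 ∂μ = 1 - 2 * ∫ x, exp x ∂μ + ∫ x, exp (2 * x) ∂μ := by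
    have hint := hexp.integrable one_le_two
    simp_rw [sq_abs, sub_sq, one_pow, mul_one, exp_sq]
    rw [integral_add (f := fun x ↦ 1 - 2 * exp x) ((integrable_const 1).sub (hint.const_mul 2)) h2,
      integral_sub (integrable_const 1) (hint.const_mul 2), integral_const_mul]
    simp
  have hmean_sq : (∫ x, |1 - exp x| ∂μ) ^ 2 ≤ (∫ x, exp x ∂μ) ^ 2 :=
    pow_le_pow_left₀ (integral_nonneg fun _ ↦ abs_nonneg _) hmean 2
  have hY : MemLp (fun x ↦ |1 - exp x|) 2 μ := ((memLp_const 1).sub hexp).abs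
  rw [variance_eq_sub hY]
  simp only [Pi.pow_apply]
  linarith

end

lemma integral_exp_mul_gaussianReal (m : ℝ) (v : NNReal) (t : ℝ) :
    ∫ x, exp (t * x) ∂gaussianReal m v = exp (m * t + v * t ^ 2 / 2) :=
  congrFun (mgf_fun_id_gaussianReal (μ := m) (v := v)) t

lemma gaussianReal_real_Iio_zero_le_half (v : NNReal) : (gaussianReal 0 v).real (Iio 0) ≤ 1 / 2 :=
  measureReal_Iio_zero_le_half_of_map_neg_eq (by simp [gaussianReal_map_neg])

theorem lognormal_error_variance_lower_bound_general {Ω : Type*} [MeasurableSpace Ω]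
    (P : Measure Ω)
    (v : NNReal) (Z : Ω → ℝ)
    (hdist : P.map Z = gaussianReal 0 v) :
    Real.exp (2 * (v : ℝ)) - Real.exp ((v : ℝ)) - 2 * Real.exp ((v : ℝ) / 2) + 1 ≤
      variance (fun ω => |1 - Real.exp (Z ω)|) P := by
  have hZ : AEMeasurable Z P := aemeasurable_of_map_neZero (by rw [hdist]; infer_instance)
  have hmoment (t : ℝ) : ∫ x, exp (t * x) ∂gaussianReal 0 v = exp (v * t ^ 2 / 2) := by
    simp [integral_exp_mul_gaussianReal]
  have h1 : ∫ x, exp x ∂gaussianReal 0 v = exp (v / 2) := by simpa using hmoment 1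
  have hexp : Integrable exp (gaussianReal 0 v) := by
    simpa using integrable_exp_mul_gaussianReal (μ := 0) (v := v) 1
  have hmean := integral_abs_one_sub_exp_le hexp (gaussianReal_real_Iio_zero_le_half v)
  calc exp (2 * v) - exp v - 2 * exp (v / 2) + 1
      = ∫ x, exp (2 * x) ∂gaussianReal 0 v - (∫ x, exp x ∂gaussianReal 0 v) ^ 2
          - 2 * ∫ x, exp x ∂gaussianReal 0 v + 1 := by
        rw [hmoment, h1, exp_sq]
        ring_nf
    _ ≤ variance (fun x ↦ |1 - exp x|) (gaussianReal 0 v) :=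
        sub_le_variance_abs_one_sub_exp (integrable_exp_mul_gaussianReal 2) hmean
    _ = variance (fun ω ↦ |1 - exp (Z ω)|) P := by
        rw [← hdist, variance_map (by fun_prop) hZ]
        rfl

/-- Let `s² > 0` and let `Z` be a real random variable distributed as
the real Gaussian with mean `0` and variance `s²`. Then the error variable
`ε = |1 − e^Z|` satisfies the variance lower bound
`Var(ε) ≥ e^{2s²} − e^{s²} − 2 e^{s²/2} + 1`. (Taking `s² = N ε_m²`, the standard
deviation of the error of a product of `N` log-normally modeled factors with machine
epsilon `ε_m` diverges exponentially with `N`.) -/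
theorem lognormal_error_variance_lower_bound {Ω : Type*} [MeasurableSpace Ω]
    (P : Measure Ω) [IsProbabilityMeasure P]
    (v : NNReal) (hv : 0 < v) (Z : Ω → ℝ) (hZ : Measurable Z)
    (hdist : P.map Z = gaussianReal 0 v) :
    Real.exp (2 * (v : ℝ)) - Real.exp ((v : ℝ)) - 2 * Real.exp ((v : ℝ) / 2) + 1 ≤
      variance (fun ω => |1 - Real.exp (Z ω)|) P :=
  lognormal_error_variance_lower_bound_general P v Z hdist
end
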